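/- arXiv:2501.16593 — 2 statements merged into one kernel-verified Lean document; each statement's English description precedes it below -/
import Mathlib

section
/- No complex root of the polynomial P(X) = X^4 - 2X^3 - 2X + 1 is a root of unity; that is, if z ∈ ℂ satisfies P(z) = 0, then z^m ≠ 1 for every positive integer m. -/
open Polynomial

/-- No complex root of `P(X) = X^4 - 2X^3 - 2X + 1` is a root of unity: if `P(z) = 0`
then `z ^ m ≠ 1` for every positive integer `m`. -/
theorem stmt_5 (z : ℂ) (hz : (X ^ 4 - 2 * X ^ 3 - 2 * X + 1 : ℂ[X]).eval z = 0) :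
    ∀ m : ℕ, 0 < m → z ^ m ≠ 1 := by
  intro m hm hzm
  have hP : z ^ 4 - 2 * z ^ 3 - 2 * z + 1 = 0 := by simpa using hz
  have hz0 : z ≠ 0 := by
    intro h; rw [h, zero_pow hm.ne'] at hzm; exact zero_ne_one hzm
  -- |z| = 1
  have habs : ‖z‖ = 1 := by
    have h1 : ‖z‖ ^ m = 1 := by rw [← norm_pow, hzm, norm_one]
    have h0 := norm_nonneg z
    rcases lt_trichotomy (‖z‖) 1 with h | h | h
    · have := pow_lt_one₀ h0 h hm.ne'
      rw [h1] at this; exact absurd this (lt_irrefl 1)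
    · exact h
    · have := one_lt_pow₀ h hm.ne'
      rw [h1] at this; exact absurd this (lt_irrefl 1)
  have hconj : z * (starRingEnd ℂ) z = 1 := by
    rw [Complex.mul_conj, Complex.normSq_eq_norm_sq, habs]; norm_num
  have hw : (starRingEnd ℂ) z = z⁻¹ := eq_inv_of_mul_eq_one_left
    (by rw [mul_comm]; exact hconj)
  -- key real equation
  have hsC : (z + (starRingEnd ℂ) z) ^ 2 - 2 * (z + (starRingEnd ℂ) z) - 2 = 0 := by
    rw [hw]
    field_simp
    linear_combination hP
  have hadd : ((2 * z.re : ℝ) : ℂ) = z + (starRingEnd ℂ) z := (Complex.add_conj z).symm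
  have ht : (2 * z.re) ^ 2 - 2 * (2 * z.re) - 2 = 0 := by
    rw [← hadd] at hsC
    exact_mod_cast hsC
  -- z is not real
  have him : z.im ≠ 0 := by
    intro h0
    have hcz : (starRingEnd ℂ) z = z := Complex.conj_eq_iff_im.mpr h0
    rw [hcz] at hconj
    have : (z - 1) * (z + 1) = 0 := by linear_combination hconj
    rcases mul_eq_zero.mp this with h | h
    · have hz1 : z = 1 := by linear_combination h
      rw [hz1] at hP; norm_num at hP
    · have hz1 : z = -1 := by linear_combination h
      rw [hz1] at hP; norm_num at hP
  -- minimal polynomial setup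
  set p : ℚ[X] := X ^ 4 - 2 * X ^ 3 - 2 * X + 1 with hpdef
  have hpm : p.Monic := by unfold p; monicity!
  have hp4 : p.natDegree = 4 := by unfold p; compute_degree!
  have hpz : (aeval z) p = 0 := by
    simp only [hpdef, map_add, map_sub, map_mul, map_pow, map_one, aeval_X, map_ofNat]
    linear_combination hP
  have hint : IsIntegral ℚ z := ⟨p, hpm, hpz⟩
  have hqm : (minpoly ℚ z).Monic := minpoly.monic hint
  have hqd : minpoly ℚ z ∣ p := minpoly.dvd ℚ z hpz
  have hqd2 : minpoly ℚ z ∣ (X ^ m - 1 : ℚ[X]) := minpoly.dvd ℚ z (by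
    simp [hzm])
  obtain ⟨c, hc⟩ := hqd
  have hcm : c.Monic := hqm.of_mul_monic_left (hc ▸ hpm)
  have hdeg : (minpoly ℚ z).natDegree + c.natDegree = 4 := by
    rw [← natDegree_mul hqm.ne_zero hcm.ne_zero, ← hc, hp4]
  have hpos : 0 < (minpoly ℚ z).natDegree := minpoly.natDegree_pos hint
  have h14 : (minpoly ℚ z).natDegree = 1 ∨ (minpoly ℚ z).natDegree = 2 ∨
      (minpoly ℚ z).natDegree = 3 ∨ (minpoly ℚ z).natDegree = 4 := by omega
  have haeval := minpoly.aeval ℚ z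
  rcases h14 with hn | hn | hn | hn
  · -- degree 1 : z rational hence real, contradiction
    rw [aeval_eq_sum_range, hn] at haeval
    have hc1 : (minpoly ℚ z).coeff 1 = 1 := by
      have := hqm.coeff_natDegree; rwa [hn] at this
    rw [Finset.sum_range_succ, Finset.sum_range_succ, Finset.sum_range_zero, hc1] at haeval
    simp only [Rat.smul_def, pow_zero, pow_one, mul_one, one_mul, zero_add] at haeval
    have : z = -(((minpoly ℚ z).coeff 0 : ℚ) : ℂ) := by linear_combination haeval
    apply him
    rw [this]
    simp
  · -- degree 2
    rw [aeval_eq_sum_range, hn] at haeval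
    have hc2 : (minpoly ℚ z).coeff 2 = 1 := by
      have := hqm.coeff_natDegree; rwa [hn] at this
    set b : ℚ := (minpoly ℚ z).coeff 1 with hb
    set c0 : ℚ := (minpoly ℚ z).coeff 0 with hc0
    rw [Finset.sum_range_succ, Finset.sum_range_succ, Finset.sum_range_succ,
      Finset.sum_range_zero, hc2] at haeval
    simp only [Rat.smul_def, pow_zero, pow_one, mul_one, one_mul, zero_add] at haeval
    -- haeval : ↑c0 + ↑b * z + z^2 = 0
    have heq2 : (c0 : ℂ) + (b : ℂ) * (starRingEnd ℂ) z + ((starRingEnd ℂ) z) ^ 2 = 0 := by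
      have := congrArg (starRingEnd ℂ) haeval
      simpa [map_ratCast] using this
    have hne : z - (starRingEnd ℂ) z ≠ 0 := by
      intro h
      exact him (Complex.conj_eq_iff_im.mp (by linear_combination -h))
    have hsum : z + (starRingEnd ℂ) z + (b : ℂ) = 0 := by
      have hmul : (z - (starRingEnd ℂ) z) * (z + (starRingEnd ℂ) z + (b : ℂ)) = 0 := by
        linear_combination haeval - heq2
      rcases mul_eq_zero.mp hmul with h | h
      · exact absurd h hne
      · exact h
    -- so (b:ℝ) = -(2 z.re)
    have hbr : ((b : ℝ) : ℂ) = -((2 * z.re : ℝ) : ℂ) := by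
      rw [hadd]; push_cast; linear_combination hsum
    have hbr' : (b : ℝ) = -(2 * z.re) := by exact_mod_cast hbr
    have hbq : (b : ℝ) ^ 2 + 2 * (b : ℝ) - 2 = 0 := by rw [hbr']; nlinarith [ht]
    have hbq2 : ((b + 1 : ℚ) : ℝ) ^ 2 = 3 := by push_cast; nlinarith [hbq]
    have h3 : Irrational (Real.sqrt 3) := by
      simpa using (Nat.prime_three).irrational_sqrt
    have hsq : Real.sqrt 3 = ((|b + 1| : ℚ) : ℝ) := by
      rw [← hbq2, Real.sqrt_sq_eq_abs]; push_cast; ring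
    exact (Rat.not_irrational _) (hsq ▸ h3)
  · -- degree 3 : rational root
    have hcd : c.natDegree = 1 := by omega
    have hcX := hcm.eq_X_add_C hcd
    set a : ℚ := -c.coeff 0 with ha
    have hpa : p.eval a = 0 := by
      rw [hc, eval_mul, hcX]
      simp [ha]
    have hpa' : a ^ 4 - 2 * a ^ 3 - 2 * a + 1 = 0 := by
      rw [hpdef] at hpa
      simpa [map_ofNat] using hpa
    have hinta : IsIntegral ℤ a := by
      refine ⟨X ^ 4 - 2 * X ^ 3 - 2 * X + 1, by monicity!, ?_⟩
      rw [← Polynomial.aeval_def]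
      have heval : (aeval a) (X ^ 4 - 2 * X ^ 3 - 2 * X + 1 : ℤ[X]) =
          a ^ 4 - 2 * a ^ 3 - 2 * a + 1 := by
        simp [map_ofNat]
      rw [heval, hpa']
    obtain ⟨n, hn'⟩ := IsIntegrallyClosed.isIntegral_iff.mp hinta
    have hna : (n : ℚ) = a := by exact_mod_cast hn'
    have hnn : n ^ 4 - 2 * n ^ 3 - 2 * n + 1 = 0 := by
      have : (n : ℚ) ^ 4 - 2 * (n : ℚ) ^ 3 - 2 * (n : ℚ) + 1 = 0 := by rw [hna]; exact hpa'
      exact_mod_cast this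
    have hdd : n ∣ 1 := ⟨-n ^ 3 + 2 * n ^ 2 + 2, by linear_combination hnn⟩
    rcases Int.isUnit_iff.mp (isUnit_of_dvd_one hdd) with h | h <;> rw [h] at hnn <;> norm_num at hnn
  · -- degree 4 : minpoly = p, so p ∣ X^m - 1, contradict real root in (0,1)
    have hcd : c.natDegree = 0 := by omega
    have hc1 : c = 1 := (hcm.natDegree_eq_zero).mp hcd
    rw [hc1, mul_one] at hc
    rw [← hc] at hqd2
    have hdvR : (p.map (algebraMap ℚ ℝ)) ∣ (X ^ m - 1 : ℝ[X]) := by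
      have := Polynomial.map_dvd (algebraMap ℚ ℝ) hqd2
      simpa using this
    have hpmap : p.map (algebraMap ℚ ℝ) = X ^ 4 - 2 * X ^ 3 - 2 * X + 1 := by
      simp [hpdef, Polynomial.map_add, Polynomial.map_sub, Polynomial.map_mul,
        Polynomial.map_pow, Polynomial.map_one, Polynomial.map_ofNat]
    set f : ℝ → ℝ := fun x => x ^ 4 - 2 * x ^ 3 - 2 * x + 1 with hf
    have hcont : ContinuousOn f (Set.Icc 0 1) := (by fun_prop : Continuous f).continuousOn
    have hiv := intermediate_value_Icc' (by norm_num : (0:ℝ) ≤ 1) hcont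
    have h0mem : (0:ℝ) ∈ Set.Icc (f 1) (f 0) := by norm_num [hf]
    obtain ⟨r, hr, hfr⟩ := hiv h0mem
    obtain ⟨d, hd⟩ := hdvR
    have hev : r ^ m - 1 = 0 := by
      have := congrArg (fun q => Polynomial.eval r q) hd
      simp only [eval_sub, eval_pow, eval_X, eval_one, eval_mul, hpmap] at this
      rw [this]
      have : eval r (X ^ 4 - 2 * X ^ 3 - 2 * X + 1 : ℝ[X]) = f r := by
        simp [hf]
      rw [this, hfr, zero_mul]
    have hr1 : r ≠ 1 := by
      intro h; rw [h] at hfr; norm_num [hf] at hfr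
    have hrlt : r < 1 := lt_of_le_of_ne hr.2 hr1
    have hlt : r ^ m < 1 := pow_lt_one₀ hr.1 hrlt hm.ne'
    exact absurd (sub_eq_zero.mp hev) (ne_of_lt hlt)
end

section
/- For every nonzero integer m, the matrix A^m - I₄ is invertible over ℚ (equivalently, its determinant is nonzero), where A is the companion matrix of X^4 - 2X^3 - 2X + 1. -/
open Matrix

/-- The companion matrix `A` of `X^4 - 2X^3 - 2X + 1`, viewed over `ℚ`. -/
noncomputable def A : Matrix (Fin 4) (Fin 4) ℚ :=
  !![0, 0, 0, -1; 1, 0, 0, 2; 0, 1, 0, 0; 0, 0, 1, 2]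

open Polynomial

noncomputable def p : ℚ[X] := X^4 - C 2 * X^3 - C 2 * X + 1
noncomputable def pZ : ℤ[X] := X^4 - C 2 * X^3 - C 2 * X + 1

lemma hA2 : A * A = !![0,0,-1,-2; 0,0,2,3; 1,0,0,2; 0,1,2,4] := by
  ext i j
  fin_cases i <;> fin_cases j <;>
    norm_num [A, Matrix.mul_apply, Fin.sum_univ_four, Matrix.vecHead, Matrix.vecTail, Matrix.cons_val_two, Matrix.cons_val_three]

lemma hA3 : A * A * A = !![0,-1,-2,-4; 0,2,3,6; 0,0,2,3; 1,2,4,10] := by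
  rw [hA2]
  ext i j
  fin_cases i <;> fin_cases j <;>
    norm_num [A, Matrix.mul_apply, Fin.sum_univ_four, Matrix.vecHead, Matrix.vecTail, Matrix.cons_val_two, Matrix.cons_val_three]

lemma hA4 : A * A * A * A = !![-1,-2,-4,-10; 2,3,6,16; 0,2,3,6; 2,4,10,23] := by
  rw [hA3]
  ext i j
  fin_cases i <;> fin_cases j <;>
    norm_num [A, Matrix.mul_apply, Fin.sum_univ_four, Matrix.vecHead, Matrix.vecTail, Matrix.cons_val_two, Matrix.cons_val_three]

set_option maxHeartbeats 1000000 in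
lemma haevalA : aeval A p = 0 := by
  have e3 : A ^ 3 = A * A * A := by rw [pow_succ, pow_two]
  have e4 : A ^ 4 = A * A * A * A := by rw [pow_succ, e3]
  simp only [p, map_add, map_sub, _root_.map_mul, map_pow, aeval_X, aeval_C, _root_.map_one,
    e3, e4, hA3, hA4, Algebra.algebraMap_eq_smul_one, smul_mul_assoc, one_mul]
  ext i j
  fin_cases i <;> fin_cases j <;>
    norm_num [A, Matrix.sub_apply, Matrix.add_apply, Matrix.smul_apply, Matrix.one_apply,
      Pi.smul_apply, Matrix.vecHead, Matrix.vecTail, Matrix.cons_val_two, Matrix.cons_val_three]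

lemma hdetA : A.det = 1 := by
  norm_num [A, Matrix.det_succ_row_zero, Fin.sum_univ_succ, Matrix.vecHead, Matrix.vecTail, Matrix.cons_val_two, Matrix.cons_val_three,
    show (Fin.castSucc 2 : Fin 4) = 2 from rfl]
lemma pZ_monic : pZ.Monic := by
  unfold pZ
  monicity!

lemma no_rat_root (r : ℚ) : r^4 - 2*r^3 - 2*r + 1 ≠ 0 := by
  intro h
  have hint : IsIntegral ℤ r := ⟨pZ, pZ_monic, by
    simp [pZ, eval₂_sub, eval₂_add, eval₂_mul, eval₂_pow]
    push_cast
    linear_combination h⟩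
  obtain ⟨n, hn⟩ := IsIntegrallyClosed.isIntegral_iff.mp hint
  have hn' : (n:ℚ) = r := by exact_mod_cast hn
  rw [← hn'] at h
  have hZ : n^4 - 2*n^3 - 2*n + 1 = 0 := by exact_mod_cast h
  have hu : IsUnit n := IsUnit.of_mul_eq_one (a := n) (-(n^3 - 2*n^2 - 2)) (by linear_combination -hZ)
  rcases Int.isUnit_iff.mp hu with h1 | h1 <;> rw [h1] at hZ <;> norm_num at hZ

lemma sqrt3_rat (a : ℚ) : (a+1)^2 ≠ 3 := by
  intro h
  have h3 : Irrational (Real.sqrt 3) := (Nat.prime_three).irrational_sqrt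
  have hR : ((a:ℝ)+1)^2 = 3 := by exact_mod_cast h
  have : Real.sqrt 3 = |(a:ℝ)+1| := by
    rw [← hR, Real.sqrt_sq_eq_abs]
  exact h3 ⟨|a+1|, by rw [Rat.cast_abs, this]; push_cast; ring⟩

lemma no_quad (a b c d : ℚ) (e3 : a + b = -2) (e2 : c + d + a*b = 0)
    (e1 : a*d + b*c = -2) (e0 : c*d = 1) : False := by
  have hc : c ≠ 0 := by rintro rfl; simp at e0
  by_cases h1 : c = 1
  · subst h1
    have hd : d = 1 := by linarith [e0]
    apply sqrt3_rat a
    have hb : b = -2 - a := by linarith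
    subst hb hd
    nlinarith [e2]
  · have key : (1-c)*(a*(1+c)+2*c) = 0 := by linear_combination c*e1 - a*e0 - c^2*e3
    have hE : a*(1+c) = -2*c := by
      rcases mul_eq_zero.mp key with h | h
      · exact absurd (by linarith) h1
      · linarith
    have h2 : c^2 + 1 + a*b*c = 0 := by linear_combination c*e2 - e0
    have hb : b = -2 - a := by linarith
    subst hb
    have final : (c^2+1)*(1+c)^2 + 4*c^2 = 0 := by
      linear_combination (1+c)^2*h2 + c*(a*(1+c)+2)*hE
    nlinarith [mul_nonneg (by positivity : (0:ℚ) ≤ c^2+1) (sq_nonneg (1+c)),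
      mul_self_pos.mpr hc]

lemma p_monic : p.Monic := by unfold p; monicity!

lemma p_natDegree : p.natDegree = 4 := by unfold p; compute_degree!

lemma monic_deg2_shape (f : ℚ[X]) (hm : f.Monic) (hd : f.natDegree = 2) :
    f = X^2 + C (f.coeff 1) * X + C (f.coeff 0) := by
  have h2 : f.coeff 2 = 1 := by have := hm.coeff_natDegree; rwa [hd] at this
  ext n
  rcases n with _ | _ | _ | n
  · simp [coeff_X_pow, coeff_C]
  · simp [coeff_X_pow, coeff_C]
  · simp [coeff_X_pow, coeff_C, h2]
  · rw [coeff_eq_zero_of_natDegree_lt (by omega)]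
    simp [coeff_X_pow, coeff_C]

lemma monic_deg1_shape (f : ℚ[X]) (hm : f.Monic) (hd : f.natDegree = 1) :
    f = X + C (f.coeff 0) := by
  have h1 : f.coeff 1 = 1 := by have := hm.coeff_natDegree; rwa [hd] at this
  ext n
  rcases n with _ | _ | n
  · simp [coeff_C]
  · simp [coeff_C, h1]
  · rw [coeff_eq_zero_of_natDegree_lt (by omega)]
    simp [coeff_C, coeff_X]

lemma expand_quad (a b c d : ℚ) :
    (X^2 + C a * X + C c) * (X^2 + C b * X + C d) =
      X^4 + C (a+b) * X^3 + C (c+d+a*b) * X^2 + C (a*d+b*c) * X + C (c*d) := by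
  simp only [map_add, _root_.map_mul]
  ring

lemma quartic_coeff_inj {a3 a2 a1 a0 b3 b2 b1 b0 : ℚ}
    (h : X^4 + C a3*X^3 + C a2*X^2 + C a1*X + C a0
       = X^4 + C b3*X^3 + C b2*X^2 + C b1*X + C b0) :
    a3 = b3 ∧ a2 = b2 ∧ a1 = b1 ∧ a0 = b0 := by
  refine ⟨?_, ?_, ?_, ?_⟩
  · have := congrArg (fun q => coeff q 3) h
    simpa [coeff_add, coeff_C_mul, coeff_X_pow, coeff_C] using this
  · have := congrArg (fun q => coeff q 2) h
    simpa [coeff_add, coeff_C_mul, coeff_X_pow, coeff_C] using this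
  · have := congrArg (fun q => coeff q 1) h
    simpa [coeff_add, coeff_C_mul, coeff_X_pow, coeff_C, coeff_X] using this
  · have := congrArg (fun q => coeff q 0) h
    simpa [coeff_add, coeff_C_mul, coeff_X_pow, coeff_C] using this

lemma p_form : p = X^4 + C (-2 : ℚ)*X^3 + C 0*X^2 + C (-2)*X + C 1 := by
  unfold p
  simp only [map_neg, _root_.map_zero, _root_.map_one]
  ring

lemma no_monic_root (f : ℚ[X]) (q : ℚ[X]) (hm : f.Monic) (hd : f.natDegree = 1)
    (hdvd : p = f * q) : False := by
  rw [monic_deg1_shape f hm hd] at hdvd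
  apply no_rat_root (-(f.coeff 0))
  have : eval (-(f.coeff 0)) p = 0 := by
    rw [hdvd]; simp
  simpa [p, eval_pow] using this

lemma p_irred : Irreducible p := by
  constructor
  · intro h
    have := natDegree_eq_zero_of_isUnit h
    rw [p_natDegree] at this; exact absurd this (by norm_num)
  · intro f g hfg
    by_contra hcon
    push_neg at hcon
    obtain ⟨huf, hug⟩ := hcon
    have hp0 : p ≠ 0 := p_monic.ne_zero
    have hf0 : f ≠ 0 := by rintro rfl; rw [hfg] at hp0; simp at hp0
    have hg0 : g ≠ 0 := by rintro rfl; rw [hfg] at hp0; simp at hp0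
    have hlf : f.leadingCoeff ≠ 0 := leadingCoeff_ne_zero.mpr hf0
    have hlg : g.leadingCoeff ≠ 0 := leadingCoeff_ne_zero.mpr hg0
    set f' := C f.leadingCoeff⁻¹ * f with hf'def
    set g' := C f.leadingCoeff * g with hg'def
    have hlfg : f.leadingCoeff * g.leadingCoeff = 1 := by
      have := congrArg leadingCoeff hfg
      rw [leadingCoeff_mul] at this
      rw [← this]; exact p_monic.leadingCoeff
    have hmf : f'.Monic := by
      unfold f'
      unfold Monic
      rw [leadingCoeff_mul, leadingCoeff_C]
      exact inv_mul_cancel₀ hlf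
    have hmg : g'.Monic := by
      unfold g'
      unfold Monic
      rw [leadingCoeff_mul, leadingCoeff_C]
      exact hlfg
    have hfg' : p = f' * g' := by
      rw [hfg, hf'def, hg'def]
      rw [mul_mul_mul_comm, ← C_mul, inv_mul_cancel₀ hlf]
      simp
    have hdf : f'.natDegree = f.natDegree := by
      unfold f'
      rw [natDegree_mul (by simpa using inv_ne_zero hlf) hf0, natDegree_C]
      omega
    have hdg : g'.natDegree = g.natDegree := by
      unfold g'
      rw [natDegree_mul (by simpa using hlf) hg0, natDegree_C]
      omega
    have hsum : f'.natDegree + g'.natDegree = 4 := by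
      have := congrArg natDegree hfg'
      rw [p_natDegree, natDegree_mul hmf.ne_zero hmg.ne_zero] at this
      omega
    have hfpos : 1 ≤ f'.natDegree := by
      by_contra h
      push_neg at h
      interval_cases hh : f'.natDegree
      · apply huf
        rw [isUnit_iff_degree_eq_zero]
        have : f.natDegree = 0 := by omega
        rw [degree_eq_natDegree hf0, this]; rfl
    have hgpos : 1 ≤ g'.natDegree := by
      by_contra h
      push_neg at h
      interval_cases hh : g'.natDegree
      · apply hug
        rw [isUnit_iff_degree_eq_zero]
        have : g.natDegree = 0 := by omega
        rw [degree_eq_natDegree hg0, this]; rfl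
    -- case analysis on degree of f'
    have hle : f'.natDegree ≤ 3 := by omega
    interval_cases hdeg : f'.natDegree
    · exact no_monic_root f' g' hmf hdeg hfg'
    · -- degree 2,2
      have hdeg2 : g'.natDegree = 2 := by omega
      rw [monic_deg2_shape f' hmf hdeg, monic_deg2_shape g' hmg hdeg2, expand_quad] at hfg'
      set a := f'.coeff 1; set c := f'.coeff 0; set b := g'.coeff 1; set d := g'.coeff 0
      rw [p_form] at hfg'
      obtain ⟨e3, e2, e1, e0⟩ := quartic_coeff_inj hfg'
      exact no_quad a b c d e3.symm (by linarith [e2]) e1.symm e0.symm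
    · have hdeg1 : g'.natDegree = 1 := by omega
      exact no_monic_root g' f' hmg hdeg1 (by rw [hfg', mul_comm])
lemma p_not_dvd (n : ℕ) (hn : 1 ≤ n) : ¬ p ∣ (X^n - 1 : ℚ[X]) := by
  intro hdvd
  have hF : Continuous (fun x : ℝ => x^4 - 2*x^3 - 2*x + 1) := by fun_prop
  have h0 : (0:ℝ) ∈ Set.Icc (((2:ℝ)^4 - 2*2^3 - 2*2 + 1)) ((3:ℝ)^4 - 2*3^3 - 2*3 + 1) := by
    norm_num
  obtain ⟨x, hx, hroot⟩ := intermediate_value_Icc (by norm_num : (2:ℝ) ≤ 3) hF.continuousOn h0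
  obtain ⟨q, hq⟩ := hdvd
  have hpx : aeval x p = 0 := by
    simp [p]
    push_cast
    linear_combination hroot
  have h2n : (2:ℝ) ≤ x^n := by
      calc (2:ℝ) = 2^1 := by norm_num
      _ ≤ 2^n := by exact pow_le_pow_right₀ (by norm_num) hn
      _ ≤ x^n := pow_le_pow_left₀ (by norm_num) hx.1 n
  have hxn : x^n = 1 := by
    have := congrArg (aeval x) hq
    rw [_root_.map_mul, hpx, zero_mul, map_sub, map_pow, aeval_X, _root_.map_one,
      sub_eq_zero] at this
    exact this
  linarith

lemma key_nat (n : ℕ) (hn : 1 ≤ n) : IsUnit (A^n - 1) := by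
  have hcop : IsCoprime p (X^n - 1 : ℚ[X]) :=
    (p_irred.coprime_iff_not_dvd).mpr (p_not_dvd n hn)
  obtain ⟨u, v, huv⟩ := hcop
  have := congrArg (aeval A) huv
  rw [map_add, _root_.map_mul, _root_.map_mul, haevalA, mul_zero, _root_.map_one, zero_add,
    map_sub, map_pow, aeval_X, _root_.map_one] at this
  rw [Matrix.isUnit_iff_isUnit_det]
  have hdet := congrArg Matrix.det this
  rw [Matrix.det_mul, Matrix.det_one] at hdet
  exact IsUnit.of_mul_eq_one _ (by rw [mul_comm] at hdet; exact hdet)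

/-- For every nonzero integer `m`, the matrix `A^m - 1` is invertible over `ℚ`;
equivalently, its determinant is nonzero. -/
theorem stmt_7 (m : ℤ) (hm : m ≠ 0) :
    IsUnit (A ^ m - 1) ∧ (A ^ m - 1).det ≠ 0 := by
  have main : IsUnit (A ^ m - 1) := by
    rcases lt_or_gt_of_ne hm with hneg | hpos
    · set k := m.natAbs with hk
      have hk1 : 1 ≤ k := by omega
      have hmk : m = -(k : ℤ) := by omega
      have hdetB : IsUnit (A ^ k).det := by
        rw [Matrix.det_pow, hdetA]; simp
      have hinv : A ^ m = (A ^ k)⁻¹ := by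
        rw [hmk, Matrix.zpow_neg_natCast]
      have heq : A ^ m - 1 = -((A ^ k)⁻¹ * (A ^ k - 1)) := by
        rw [hinv, mul_sub, Matrix.nonsing_inv_mul _ hdetB, mul_one]
        noncomm_ring
      rw [heq]
      apply IsUnit.neg
      apply IsUnit.mul _ (key_nat k hk1)
      rw [Matrix.isUnit_iff_isUnit_det, Matrix.det_nonsing_inv, Matrix.det_pow, hdetA]
      simp
    · have hmk : m = (m.toNat : ℤ) := by omega
      rw [hmk, zpow_natCast]
      exact key_nat m.toNat (by omega)
  exact ⟨main, by
    intro h0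
    have := (Matrix.isUnit_iff_isUnit_det _).mp main
    rw [h0] at this
    exact this.ne_zero rfl⟩
end
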